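/- arXiv:1410.3265 — 10 statements merged into one kernel-verified Lean document; each statement's English description precedes it below -/
import Mathlib

section
/- For nonnegative reals b1, b2, b3, b4, one has sqrt(b1 + b2 + b3 + b4) + sqrt(b3 + b4) ≤ sqrt(b2 + b3 + b4) + sqrt(b1 + b3) + sqrt(b4). -/
lemma subadd (a b : ℝ) (ha : 0 ≤ a) (hb : 0 ≤ b) :
    Real.sqrt (a + b) ≤ Real.sqrt a + Real.sqrt b := by
  nlinarith [Real.sq_sqrt ha, Real.sq_sqrt hb, Real.sq_sqrt (add_nonneg ha hb),
    Real.sqrt_nonneg a, Real.sqrt_nonneg b, Real.sqrt_nonneg (a+b),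
    sq_nonneg (Real.sqrt a + Real.sqrt b - Real.sqrt (a+b)),
    mul_nonneg (Real.sqrt_nonneg a) (Real.sqrt_nonneg b)]

lemma diffmono (a x y : ℝ) (ha : 0 ≤ a) (hy : 0 ≤ y) (hxy : y ≤ x) :
    Real.sqrt (x + a) + Real.sqrt y ≤ Real.sqrt x + Real.sqrt (y + a) := by
  have hx : 0 ≤ x := hy.trans hxy
  have key : Real.sqrt (x + a) * Real.sqrt y ≤ Real.sqrt x * Real.sqrt (y + a) := by
    rw [← Real.sqrt_mul (add_nonneg hx ha), ← Real.sqrt_mul hx]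
    exact Real.sqrt_le_sqrt (by nlinarith)
  nlinarith [Real.sq_sqrt hx, Real.sq_sqrt hy, Real.sq_sqrt (add_nonneg hx ha),
    Real.sq_sqrt (add_nonneg hy ha), Real.sqrt_nonneg x, Real.sqrt_nonneg y,
    Real.sqrt_nonneg (x+a), Real.sqrt_nonneg (y+a),
    sq_nonneg (Real.sqrt (x+a) + Real.sqrt y + Real.sqrt x + Real.sqrt (y+a))]

theorem sqrt_constraint_subset_13
    (b1 b2 b3 b4 : ℝ) (hb1 : 0 ≤ b1) (hb2 : 0 ≤ b2) (hb3 : 0 ≤ b3) (hb4 : 0 ≤ b4) :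
    Real.sqrt (b1 + b2 + b3 + b4) + Real.sqrt (b3 + b4) ≤
      Real.sqrt (b2 + b3 + b4) + Real.sqrt (b1 + b3) + Real.sqrt b4 := by
  have h1 : Real.sqrt (b1 + b2 + b3 + b4) + Real.sqrt (b3 + b4) ≤
      Real.sqrt (b2 + b3 + b4) + Real.sqrt (b3 + b4 + b1) := by
    have := diffmono b1 (b2 + b3 + b4) (b3 + b4) hb1 (add_nonneg hb3 hb4) (by linarith)
    have e : b2 + b3 + b4 + b1 = b1 + b2 + b3 + b4 := by ring
    rw [e] at this
    linarith
  have h2 : Real.sqrt (b3 + b4 + b1) ≤ Real.sqrt (b1 + b3) + Real.sqrt b4 := by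
    have := subadd (b1 + b3) b4 (add_nonneg hb1 hb3) hb4
    have e : b1 + b3 + b4 = b3 + b4 + b1 := by ring
    rw [e] at this
    exact this
  linarith
end

section
/- Let n0 ≥ 0 and β1, β2, β3, β4 > 0 be reals. Define x1 = (n0/β1)(sqrt(β1+β2+β3+β4) - sqrt(β2+β3+β4)), x2 = (n0/β2)(sqrt(β2+β3+β4) - sqrt(β3+β4)), x3 = (n0/β3)(sqrt(β3+β4) - sqrt(β4)), x4 = (n0/β4) sqrt(β4). Then for every nonempty subset S of {1,2,3,4}, ∑_{k ∈ S} βk * xk ≤ n0 * sqrt(∑_{k ∈ S} βk). -/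
lemma sqrt_diff_le_aux (a b c b' c' : ℝ) (ha : 0 ≤ a) (hb : 0 ≤ b) (hbc : b ≤ c)
    (e1 : b' = a + b) (e2 : c' = a + c) :
    Real.sqrt c' - Real.sqrt c ≤ Real.sqrt b' - Real.sqrt b := by
  subst e1 e2
  have hc : 0 ≤ c := hb.trans hbc
  have h1 := Real.sq_sqrt (by linarith : (0:ℝ) ≤ a + c)
  have h2 := Real.sq_sqrt hc
  have h3 := Real.sq_sqrt (by linarith : (0:ℝ) ≤ a + b)
  have h4 := Real.sq_sqrt hb
  have h5 : Real.sqrt b ≤ Real.sqrt c := Real.sqrt_le_sqrt hbc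
  have h6 : Real.sqrt b ≤ Real.sqrt (a + b) := Real.sqrt_le_sqrt (by linarith)
  have h7 : Real.sqrt (a + b) ≤ Real.sqrt (a + c) := Real.sqrt_le_sqrt (by linarith)
  have n1 := Real.sqrt_nonneg (a + c)
  have n2 := Real.sqrt_nonneg c
  have n3 := Real.sqrt_nonneg (a + b)
  have n4 := Real.sqrt_nonneg b
  nlinarith [mul_nonneg (sub_nonneg.2 h6) (sub_nonneg.2 h5),
    sq_nonneg (Real.sqrt (a+c) - Real.sqrt (a+b)), sq_nonneg (Real.sqrt c - Real.sqrt b),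
    sq_nonneg (Real.sqrt (a+c) + Real.sqrt b - Real.sqrt (a+b) - Real.sqrt c)]

lemma sqrt_diff_le_aux' (a c c' : ℝ) (ha : 0 ≤ a) (hc : 0 ≤ c) (e2 : c' = a + c) :
    Real.sqrt c' - Real.sqrt c ≤ Real.sqrt a := by
  have := sqrt_diff_le_aux a 0 c a c' ha le_rfl hc (by ring) e2
  simpa using this

set_option maxHeartbeats 2000000 in
theorem optimal_point_feasible_K4
    (n0 β1 β2 β3 β4 x1 x2 x3 x4 : ℝ) (hn0 : 0 ≤ n0)
    (hβ1 : 0 < β1) (hβ2 : 0 < β2) (hβ3 : 0 < β3) (hβ4 : 0 < β4)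
    (hx1 : x1 = (n0 / β1) * (Real.sqrt (β1 + β2 + β3 + β4) - Real.sqrt (β2 + β3 + β4)))
    (hx2 : x2 = (n0 / β2) * (Real.sqrt (β2 + β3 + β4) - Real.sqrt (β3 + β4)))
    (hx3 : x3 = (n0 / β3) * (Real.sqrt (β3 + β4) - Real.sqrt β4))
    (hx4 : x4 = (n0 / β4) * Real.sqrt β4) :
    ∀ S : Finset (Fin 4), S.Nonempty →
      ∑ k ∈ S, (![β1, β2, β3, β4]) k * (![x1, x2, x3, x4]) k ≤
        n0 * Real.sqrt (∑ k ∈ S, (![β1, β2, β3, β4]) k) := by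
  have hb1 : β1 * x1 = n0 * (Real.sqrt (β1 + β2 + β3 + β4) - Real.sqrt (β2 + β3 + β4)) := by
    rw [hx1]; field_simp
  have hb2 : β2 * x2 = n0 * (Real.sqrt (β2 + β3 + β4) - Real.sqrt (β3 + β4)) := by
    rw [hx2]; field_simp
  have hb3 : β3 * x3 = n0 * (Real.sqrt (β3 + β4) - Real.sqrt β4) := by
    rw [hx3]; field_simp
  have hb4 : β4 * x4 = n0 * Real.sqrt β4 := by
    rw [hx4]; field_simp
  intro S hS
  fin_cases S
  all_goals simp [Finset.sum_insert, Fin.sum_univ_succ]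
  -- {1}
  · rw [hb1]
    have h1 := sqrt_diff_le_aux' β1 (β2+β3+β4) (β1+β2+β3+β4) hβ1.le (by linarith) (by ring)
    nlinarith [mul_le_mul_of_nonneg_left h1 hn0]
  -- {2}
  · rw [hb2]
    have h2 := sqrt_diff_le_aux' β2 (β3+β4) (β2+β3+β4) hβ2.le (by linarith) (by ring)
    nlinarith [mul_le_mul_of_nonneg_left h2 hn0]
  -- {1,2}
  · rw [hb1, hb2]
    have h1 := sqrt_diff_le_aux β1 β2 (β2+β3+β4) (β1+β2) (β1+β2+β3+β4) hβ1.le hβ2.le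
      (by linarith) (by ring) (by ring)
    have h2 := sqrt_diff_le_aux' β2 (β3+β4) (β2+β3+β4) hβ2.le (by linarith) (by ring)
    nlinarith [mul_le_mul_of_nonneg_left h1 hn0, mul_le_mul_of_nonneg_left h2 hn0]
  -- {3}
  · rw [hb3]
    have h3 := sqrt_diff_le_aux' β3 β4 (β3+β4) hβ3.le hβ4.le (by ring)
    nlinarith [mul_le_mul_of_nonneg_left h3 hn0]
  -- {1,3}
  · rw [hb1, hb3]
    have h1 := sqrt_diff_le_aux β1 β3 (β2+β3+β4) (β1+β3) (β1+β2+β3+β4) hβ1.le hβ3.le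
      (by linarith) (by ring) (by ring)
    have h3 := sqrt_diff_le_aux' β3 β4 (β3+β4) hβ3.le hβ4.le (by ring)
    nlinarith [mul_le_mul_of_nonneg_left h1 hn0, mul_le_mul_of_nonneg_left h3 hn0]
  -- {2,3}
  · rw [hb2, hb3]
    have h2 := sqrt_diff_le_aux β2 β3 (β3+β4) (β2+β3) (β2+β3+β4) hβ2.le hβ3.le
      (by linarith) (by ring) (by ring)
    have h3 := sqrt_diff_le_aux' β3 β4 (β3+β4) hβ3.le hβ4.le (by ring)
    nlinarith [mul_le_mul_of_nonneg_left h2 hn0, mul_le_mul_of_nonneg_left h3 hn0]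
  -- {1,2,3}
  · rw [hb1, hb2, hb3]
    have h1 := sqrt_diff_le_aux β1 (β2+β3) (β2+β3+β4) (β1+(β2+β3)) (β1+β2+β3+β4) hβ1.le
      (by linarith) (by linarith) (by ring) (by ring)
    have h2 := sqrt_diff_le_aux β2 β3 (β3+β4) (β2+β3) (β2+β3+β4) hβ2.le hβ3.le
      (by linarith) (by ring) (by ring)
    have h3 := sqrt_diff_le_aux' β3 β4 (β3+β4) hβ3.le hβ4.le (by ring)
    nlinarith [mul_le_mul_of_nonneg_left h1 hn0, mul_le_mul_of_nonneg_left h2 hn0,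
      mul_le_mul_of_nonneg_left h3 hn0]
  -- {4}
  · rw [hb4]
  -- {1,4}
  · rw [hb1, hb4]
    have h1 := sqrt_diff_le_aux β1 β4 (β2+β3+β4) (β1+β4) (β1+β2+β3+β4) hβ1.le hβ4.le
      (by linarith) (by ring) (by ring)
    nlinarith [mul_le_mul_of_nonneg_left h1 hn0]
  -- {2,4}
  · rw [hb2, hb4]
    have h2 := sqrt_diff_le_aux β2 β4 (β3+β4) (β2+β4) (β2+β3+β4) hβ2.le hβ4.le
      (by linarith) (by ring) (by ring)
    nlinarith [mul_le_mul_of_nonneg_left h2 hn0]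
  -- {1,2,4}
  · rw [hb1, hb2, hb4]
    have h1 := sqrt_diff_le_aux β1 (β2+β4) (β2+β3+β4) (β1+(β2+β4)) (β1+β2+β3+β4) hβ1.le
      (by linarith) (by linarith) (by ring) (by ring)
    have h2 := sqrt_diff_le_aux β2 β4 (β3+β4) (β2+β4) (β2+β3+β4) hβ2.le hβ4.le
      (by linarith) (by ring) (by ring)
    nlinarith [mul_le_mul_of_nonneg_left h1 hn0, mul_le_mul_of_nonneg_left h2 hn0]
  -- {3,4}
  · rw [hb3, hb4]
    have h3 := sqrt_diff_le_aux β3 β4 β4 (β3+β4) (β3+β4) hβ3.le hβ4.le le_rfl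
      (by ring) (by ring)
    nlinarith [mul_le_mul_of_nonneg_left h3 hn0]
  -- {1,3,4}
  · rw [hb1, hb3, hb4]
    have h1 := sqrt_diff_le_aux β1 (β3+β4) (β2+β3+β4) (β1+(β3+β4)) (β1+β2+β3+β4) hβ1.le
      (by linarith) (by linarith) (by ring) (by ring)
    have h3 := sqrt_diff_le_aux β3 β4 β4 (β3+β4) (β3+β4) hβ3.le hβ4.le le_rfl
      (by ring) (by ring)
    nlinarith [mul_le_mul_of_nonneg_left h1 hn0, mul_le_mul_of_nonneg_left h3 hn0]
  -- {2,3,4}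
  · rw [hb2, hb3, hb4]
    have h2 := sqrt_diff_le_aux β2 (β3+β4) (β3+β4) (β2+(β3+β4)) (β2+β3+β4) hβ2.le
      (by linarith) le_rfl (by ring) (by ring)
    have h3 := sqrt_diff_le_aux β3 β4 β4 (β3+β4) (β3+β4) hβ3.le hβ4.le le_rfl
      (by ring) (by ring)
    nlinarith [mul_le_mul_of_nonneg_left h2 hn0, mul_le_mul_of_nonneg_left h3 hn0]
  -- {1,2,3,4}
  · rw [hb1, hb2, hb3, hb4]
    have h1 := sqrt_diff_le_aux β1 (β2+(β3+β4)) (β2+β3+β4) (β1+(β2+(β3+β4))) (β1+β2+β3+β4)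
      hβ1.le (by linarith) (by linarith) (by ring) (by ring)
    have h2 := sqrt_diff_le_aux β2 (β3+β4) (β3+β4) (β2+(β3+β4)) (β2+β3+β4) hβ2.le
      (by linarith) le_rfl (by ring) (by ring)
    have h3 := sqrt_diff_le_aux β3 β4 β4 (β3+β4) (β3+β4) hβ3.le hβ4.le le_rfl
      (by ring) (by ring)
    nlinarith [mul_le_mul_of_nonneg_left h1 hn0, mul_le_mul_of_nonneg_left h2 hn0,
      mul_le_mul_of_nonneg_left h3 hn0]
end

section
/- Let n0 ≥ 0, K a positive natural number, α, β : Fin K → ℝ with α k ≥ 0 and β k > 0, and suppose the sequence γ k = α k / β k is nondecreasing in k. Let x : Fin K → ℝ satisfy ∑_{k ∈ S} β k * x k ≤ n0 * sqrt(∑_{k ∈ S} β k) for every nonempty subset S of Fin K. Then ∑_k α k * x k ≤ n0 * ∑_{n} (γ n - γ (n-1)) * sqrt(∑_{k ≥ n} β k), where γ at index -1 is taken to be 0. -/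
theorem abel_aux (K : ℕ) (n0 : ℝ) (γ : Fin K → ℝ)
    (hγ0 : ∀ k, 0 ≤ γ k) (hmono : ∀ i j : Fin K, i ≤ j → γ i ≤ γ j)
    (β y : Fin K → ℝ)
    (hx : ∀ S : Finset (Fin K), S.Nonempty →
      ∑ k ∈ S, y k ≤ n0 * Real.sqrt (∑ k ∈ S, β k)) :
    ∑ k, γ k * y k ≤
      n0 * ∑ n : Fin K,
        (γ n - (if n.val = 0 then 0 else
            γ ⟨n.val - 1, Nat.lt_of_le_of_lt (Nat.sub_le _ _) n.isLt⟩)) *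
        Real.sqrt (∑ k ∈ Finset.univ.filter (fun k => n ≤ k), β k) := by
  classical
  set δ : Fin K → ℝ := fun n => γ n - (if n.val = 0 then 0 else
      γ ⟨n.val - 1, Nat.lt_of_le_of_lt (Nat.sub_le _ _) n.isLt⟩) with hδ
  have hδ0 : ∀ n, 0 ≤ δ n := by
    intro n
    simp only [hδ]
    by_cases h : n.val = 0
    · simp [h, hγ0 n]
    · simp only [h, if_false, sub_nonneg]
      exact hmono _ n (by simp [Fin.le_def])
  have htel : ∀ k : Fin K, ∑ n ∈ Finset.univ.filter (fun n => n ≤ k), δ n = γ k := by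
    intro k
    set G : ℕ → ℝ := fun m => if h : m < K then γ ⟨m, h⟩ else 0 with hG
    set D : ℕ → ℝ := fun m => G m - (if m = 0 then 0 else G (m - 1)) with hD
    have tel : ∀ m, ∑ i ∈ Finset.range (m + 1), D i = G m := by
      intro m
      induction m with
      | zero => simp [hD]
      | succ m ih =>
        rw [Finset.sum_range_succ, ih]
        simp [hD]
    have hδD : ∀ n : Fin K, δ n = D n.val := by
      intro n
      simp only [hδ, hD, hG]
      rw [dif_pos n.isLt]
      by_cases h : n.val = 0
      · rw [if_pos h, if_pos h]
      · rw [if_neg h, if_neg h, dif_pos (Nat.lt_of_le_of_lt (Nat.sub_le _ _) n.isLt)]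
    calc ∑ n ∈ Finset.univ.filter (fun n => n ≤ k), δ n
        = ∑ n : Fin K, if n ≤ k then δ n else 0 := Finset.sum_filter _ _
      _ = ∑ m ∈ Finset.range K, if m ≤ k.val then D m else 0 := by
          rw [← Fin.sum_univ_eq_sum_range (fun m => if m ≤ k.val then D m else 0) K]
          refine Finset.sum_congr rfl fun n _ => ?_
          simp only [Fin.le_def, hδD n]
      _ = ∑ m ∈ (Finset.range K).filter (fun m => m ≤ k.val), D m :=
          (Finset.sum_filter _ _).symm
      _ = ∑ m ∈ Finset.range (k.val + 1), D m := by
          congr 1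
          ext m
          simp only [Finset.mem_filter, Finset.mem_range]
          have := k.isLt
          omega
      _ = G k.val := tel k.val
      _ = γ k := by simp [hG, k.isLt]
  calc ∑ k, γ k * y k
      = ∑ k : Fin K, ∑ n ∈ Finset.univ.filter (fun n => n ≤ k), δ n * y k := by
        refine Finset.sum_congr rfl fun k _ => ?_
        rw [← Finset.sum_mul, htel k]
    _ = ∑ n : Fin K, ∑ k ∈ Finset.univ.filter (fun k => n ≤ k), δ n * y k := by
        refine Finset.sum_comm' ?_
        intro i j
        simp
    _ = ∑ n : Fin K, δ n * ∑ k ∈ Finset.univ.filter (fun k => n ≤ k), y k := by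
        refine Finset.sum_congr rfl fun n _ => ?_
        rw [Finset.mul_sum]
    _ ≤ ∑ n : Fin K, δ n * (n0 * Real.sqrt (∑ k ∈ Finset.univ.filter (fun k => n ≤ k), β k)) := by
        refine Finset.sum_le_sum fun n _ => ?_
        exact mul_le_mul_of_nonneg_left (hx _ ⟨n, by simp⟩) (hδ0 n)
    _ = n0 * ∑ n : Fin K, δ n *
          Real.sqrt (∑ k ∈ Finset.univ.filter (fun k => n ≤ k), β k) := by
        rw [Finset.mul_sum]
        exact Finset.sum_congr rfl fun n _ => by ring

theorem linear_objective_upper_bound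
    (K : ℕ) (hK : 0 < K) (n0 : ℝ) (hn0 : 0 ≤ n0)
    (α β : Fin K → ℝ) (hα : ∀ k, 0 ≤ α k) (hβ : ∀ k, 0 < β k)
    (hmono : ∀ i j : Fin K, i ≤ j → α i / β i ≤ α j / β j)
    (x : Fin K → ℝ)
    (hx : ∀ S : Finset (Fin K), S.Nonempty →
      ∑ k ∈ S, β k * x k ≤ n0 * Real.sqrt (∑ k ∈ S, β k)) :
    ∑ k, α k * x k ≤
      n0 * ∑ n : Fin K,
        ((α n / β n) -
          (if n.val = 0 then 0 else
            α ⟨n.val - 1, Nat.lt_of_le_of_lt (Nat.sub_le _ _) n.isLt⟩ /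
            β ⟨n.val - 1, Nat.lt_of_le_of_lt (Nat.sub_le _ _) n.isLt⟩)) *
        Real.sqrt (∑ k ∈ Finset.univ.filter (fun k => n ≤ k), β k) := by
  have heq : ∑ k, α k * x k = ∑ k : Fin K, (α k / β k) * (β k * x k) := by
    refine Finset.sum_congr rfl fun k _ => ?_
    have hk := (hβ k).ne'
    field_simp
  rw [heq]
  exact abel_aux K n0 (fun k => α k / β k)
    (fun k => div_nonneg (hα k) (hβ k).le) hmono β (fun k => β k * x k) hx
end

section
/- Let n0 ≥ 0 and let α1, α2 ≥ 0, β1, β2 > 0 be reals with α1/β1 ≤ α2/β2. For all reals x1, x2 satisfying β1 x1 + β2 x2 ≤ n0 sqrt(β1 + β2), x1 ≤ n0/sqrt(β1), and x2 ≤ n0/sqrt(β2), one has α1 x1 + α2 x2 ≤ n0 * (α1/β1) * sqrt(β1 + β2) + n0 * (α2/β2 − α1/β1) * sqrt(β2). Moreover this bound is attained at x1 = (n0/β1)(sqrt(β1+β2) − sqrt(β2)), x2 = (n0/β2) sqrt(β2). -/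
theorem K2_upper_bound_and_attained
    (n0 α1 α2 β1 β2 : ℝ) (hn0 : 0 ≤ n0)
    (hα1 : 0 ≤ α1) (hα2 : 0 ≤ α2) (hβ1 : 0 < β1) (hβ2 : 0 < β2)
    (hratio : α1 / β1 ≤ α2 / β2) :
    (∀ x1 x2 : ℝ,
      β1 * x1 + β2 * x2 ≤ n0 * Real.sqrt (β1 + β2) →
      x1 ≤ n0 / Real.sqrt β1 →
      x2 ≤ n0 / Real.sqrt β2 →
      α1 * x1 + α2 * x2 ≤
        n0 * (α1 / β1) * Real.sqrt (β1 + β2) + n0 * (α2 / β2 - α1 / β1) * Real.sqrt β2) ∧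
    (α1 * ((n0 / β1) * (Real.sqrt (β1 + β2) - Real.sqrt β2)) +
        α2 * ((n0 / β2) * Real.sqrt β2) =
      n0 * (α1 / β1) * Real.sqrt (β1 + β2) + n0 * (α2 / β2 - α1 / β1) * Real.sqrt β2) := by
  have hs2 : Real.sqrt β2 > 0 := Real.sqrt_pos.mpr hβ2
  have hsq2 : Real.sqrt β2 * Real.sqrt β2 = β2 := Real.mul_self_sqrt hβ2.le
  have hd : n0 / Real.sqrt β2 = n0 * Real.sqrt β2 / β2 := by
    rw [div_eq_div_iff hs2.ne' hβ2.ne']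
    nlinarith [hsq2]
  constructor
  · intro x1 x2 h1 _ h3
    have hc : 0 ≤ α2 - (α1 / β1) * β2 := by
      have h := sub_nonneg.mpr hratio
      have : (α2 / β2 - α1 / β1) * β2 = α2 - (α1 / β1) * β2 := by
        field_simp
      nlinarith
    have key : α1 * x1 + α2 * x2
        = (α1 / β1) * (β1 * x1 + β2 * x2) + (α2 - (α1 / β1) * β2) * x2 := by
      field_simp; ring
    rw [key]
    have hα1β : 0 ≤ α1 / β1 := div_nonneg hα1 hβ1.le
    have step1 : (α1 / β1) * (β1 * x1 + β2 * x2) ≤ (α1 / β1) * (n0 * Real.sqrt (β1 + β2)) :=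
      mul_le_mul_of_nonneg_left h1 hα1β
    have step2 : (α2 - (α1 / β1) * β2) * x2 ≤ (α2 - (α1 / β1) * β2) * (n0 / Real.sqrt β2) :=
      mul_le_mul_of_nonneg_left h3 hc
    have heq2 : (α2 - (α1 / β1) * β2) * (n0 / Real.sqrt β2)
        = n0 * (α2 / β2 - α1 / β1) * Real.sqrt β2 := by
      rw [hd]
      field_simp
    calc (α1 / β1) * (β1 * x1 + β2 * x2) + (α2 - (α1 / β1) * β2) * x2
        ≤ (α1 / β1) * (n0 * Real.sqrt (β1 + β2)) + (α2 - (α1 / β1) * β2) * (n0 / Real.sqrt β2) :=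
          add_le_add step1 step2
      _ = n0 * (α1 / β1) * Real.sqrt (β1 + β2) + n0 * (α2 / β2 - α1 / β1) * Real.sqrt β2 := by
          rw [heq2]; ring
  · field_simp
    nlinarith [hsq2]
end

section
/- Let n0 ≥ 0 and β1, β2 > 0. The point x1 = (n0/β1)(sqrt(β1+β2) − sqrt(β2)), x2 = (n0/β2) sqrt(β2) satisfies all three constraints |β1 x1 + β2 x2| ≤ n0 sqrt(β1 + β2), |x1| ≤ n0/sqrt(β1), and |x2| ≤ n0/sqrt(β2). -/
theorem K2_optimal_point_feasible
    (n0 β1 β2 : ℝ) (hn0 : 0 ≤ n0) (hβ1 : 0 < β1) (hβ2 : 0 < β2) :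
    |β1 * ((n0 / β1) * (Real.sqrt (β1 + β2) - Real.sqrt β2)) +
        β2 * ((n0 / β2) * Real.sqrt β2)| ≤ n0 * Real.sqrt (β1 + β2) ∧
    |(n0 / β1) * (Real.sqrt (β1 + β2) - Real.sqrt β2)| ≤ n0 / Real.sqrt β1 ∧
    |(n0 / β2) * Real.sqrt β2| ≤ n0 / Real.sqrt β2 := by
  have h1 : (0:ℝ) ≤ β1 := hβ1.le
  have h2 : (0:ℝ) ≤ β2 := hβ2.le
  have hs1 : 0 < Real.sqrt β1 := Real.sqrt_pos.mpr hβ1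
  have hs2 : 0 < Real.sqrt β2 := Real.sqrt_pos.mpr hβ2
  have hs12 : 0 ≤ Real.sqrt (β1 + β2) := Real.sqrt_nonneg _
  have hsub : Real.sqrt (β1 + β2) ≤ Real.sqrt β1 + Real.sqrt β2 := by
    rw [← Real.sqrt_sq (by positivity : (0:ℝ) ≤ Real.sqrt β1 + Real.sqrt β2)]
    apply Real.sqrt_le_sqrt
    have e1 : Real.sqrt β1 ^ 2 = β1 := Real.sq_sqrt h1
    have e2 : Real.sqrt β2 ^ 2 = β2 := Real.sq_sqrt h2
    nlinarith [Real.sqrt_nonneg β1, Real.sqrt_nonneg β2]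
  have hge : Real.sqrt β2 ≤ Real.sqrt (β1 + β2) :=
    Real.sqrt_le_sqrt (by linarith)
  refine ⟨?_, ?_, ?_⟩
  · have : β1 * ((n0 / β1) * (Real.sqrt (β1 + β2) - Real.sqrt β2)) +
        β2 * ((n0 / β2) * Real.sqrt β2) = n0 * Real.sqrt (β1 + β2) := by
      field_simp
      ring
    rw [this, abs_of_nonneg (by positivity)]
  · have hx : 0 ≤ (n0 / β1) * (Real.sqrt (β1 + β2) - Real.sqrt β2) := by
      apply mul_nonneg (by positivity); linarith
    rw [abs_of_nonneg hx]
    rw [div_mul_eq_mul_div, div_le_div_iff₀ hβ1 hs1]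
    have hb1 : β1 = Real.sqrt β1 * Real.sqrt β1 := (Real.mul_self_sqrt h1).symm
    have key : Real.sqrt (β1 + β2) - Real.sqrt β2 ≤ Real.sqrt β1 := by linarith
    calc n0 * (Real.sqrt (β1 + β2) - Real.sqrt β2) * Real.sqrt β1
        ≤ n0 * Real.sqrt β1 * Real.sqrt β1 := by
          apply mul_le_mul_of_nonneg_right _ hs1.le
          exact mul_le_mul_of_nonneg_left key hn0
      _ = n0 * β1 := by rw [mul_assoc, Real.mul_self_sqrt h1]
  · have he : (n0 / β2) * Real.sqrt β2 = n0 / Real.sqrt β2 := by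
      rw [eq_div_iff hs2.ne', mul_assoc, Real.mul_self_sqrt h2, div_mul_cancel₀ _ hβ2.ne']
    rw [he, abs_of_nonneg (by positivity)]
end

section
/- Let n0 ≥ 0 and β1, β2, β3 > 0, and set x1 = (n0/β1)(sqrt(β1+β2+β3) − sqrt(β2+β3)), x2 = (n0/β2)(sqrt(β2+β3) − sqrt(β3)), x3 = (n0/β3) sqrt(β3). Then for every nonempty subset S of {1,2,3}, ∑_{k∈S} βk xk ≤ n0 sqrt(∑_{k∈S} βk). -/
lemma sqrt_shift (a b c : ℝ) (hb : 0 ≤ b) (hba : b ≤ a) (hc : 0 ≤ c) :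
    Real.sqrt (a + c) + Real.sqrt b ≤ Real.sqrt (b + c) + Real.sqrt a := by
  have ha : 0 ≤ a := hb.trans hba
  have h1 : Real.sqrt ((a+c)*b) ≤ Real.sqrt ((b+c)*a) := Real.sqrt_le_sqrt (by nlinarith)
  rw [Real.sqrt_mul (by linarith), Real.sqrt_mul (by linarith)] at h1
  nlinarith [Real.sq_sqrt (show (0:ℝ) ≤ a+c by linarith), Real.sq_sqrt hb,
    Real.sq_sqrt (show (0:ℝ) ≤ b+c by linarith), Real.sq_sqrt ha,
    Real.sqrt_nonneg (a+c), Real.sqrt_nonneg b, Real.sqrt_nonneg (b+c), Real.sqrt_nonneg a]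

lemma sqrt_subadd (a c : ℝ) (ha : 0 ≤ a) (hc : 0 ≤ c) :
    Real.sqrt (a + c) ≤ Real.sqrt a + Real.sqrt c := by
  have := sqrt_shift a 0 c le_rfl ha hc
  simp at this
  linarith

theorem optimal_point_feasible_K3
    (n0 β1 β2 β3 x1 x2 x3 : ℝ) (hn0 : 0 ≤ n0)
    (hβ1 : 0 < β1) (hβ2 : 0 < β2) (hβ3 : 0 < β3)
    (hx1 : x1 = (n0 / β1) * (Real.sqrt (β1 + β2 + β3) - Real.sqrt (β2 + β3)))
    (hx2 : x2 = (n0 / β2) * (Real.sqrt (β2 + β3) - Real.sqrt β3))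
    (hx3 : x3 = (n0 / β3) * Real.sqrt β3) :
    ∀ S : Finset (Fin 3), S.Nonempty →
      ∑ k ∈ S, (![β1, β2, β3]) k * (![x1, x2, x3]) k ≤
        n0 * Real.sqrt (∑ k ∈ S, (![β1, β2, β3]) k) := by
  have e1 : β1 * x1 = n0 * (Real.sqrt (β1+β2+β3) - Real.sqrt (β2+β3)) := by
    rw [hx1]; field_simp
  have e2 : β2 * x2 = n0 * (Real.sqrt (β2+β3) - Real.sqrt β3) := by
    rw [hx2]; field_simp
  have e3 : β3 * x3 = n0 * Real.sqrt β3 := by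
    rw [hx3]; field_simp
  have sub12 : Real.sqrt (β1+β2+β3) ≤ Real.sqrt (β2+β3) + Real.sqrt β1 := by
    have := sqrt_subadd (β2+β3) β1 (by linarith) hβ1.le
    calc Real.sqrt (β1+β2+β3) = Real.sqrt (β2+β3+β1) := by ring_nf
      _ ≤ _ := this
  have sub2 : Real.sqrt (β2+β3) ≤ Real.sqrt β3 + Real.sqrt β2 := by
    have := sqrt_subadd β3 β2 hβ3.le hβ2.le
    calc Real.sqrt (β2+β3) = Real.sqrt (β3+β2) := by ring_nf
      _ ≤ _ := this
  have sub3 : Real.sqrt (β1+β2+β3) ≤ Real.sqrt β3 + Real.sqrt (β1+β2) := by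
    have := sqrt_subadd β3 (β1+β2) hβ3.le (by linarith)
    calc Real.sqrt (β1+β2+β3) = Real.sqrt (β3+(β1+β2)) := by ring_nf
      _ ≤ _ := this
  have shift13 : Real.sqrt (β1+β2+β3) + Real.sqrt β3 ≤ Real.sqrt (β2+β3) + Real.sqrt (β1+β3) := by
    have := sqrt_shift (β1+β3) β3 β2 hβ3.le (by linarith) hβ2.le
    calc Real.sqrt (β1+β2+β3) + Real.sqrt β3 = Real.sqrt ((β1+β3)+β2) + Real.sqrt β3 := by ring_nf
      _ ≤ Real.sqrt (β3+β2) + Real.sqrt (β1+β3) := this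
      _ = _ := by ring_nf
  intro S hS
  fin_cases S
  · exact absurd rfl hS.ne_empty
  all_goals simp [Fin.sum_univ_succ, e1, e2, e3]
  · nlinarith [mul_le_mul_of_nonneg_left sub12 hn0]
  · nlinarith [mul_le_mul_of_nonneg_left sub2 hn0]
  · nlinarith [mul_le_mul_of_nonneg_left sub3 hn0]
  · nlinarith [mul_le_mul_of_nonneg_left shift13 hn0]
  · linarith
  · rw [show β1+(β2+β3) = β1+β2+β3 by ring]; linarith
end

section
/- Let n0 ≥ 0 and β1, β2, β3 > 0 and suppose x1, x2, x3 are reals with |β1 x1 + β2 x2 + β3 x3| ≤ n0 sqrt(β1+β2+β3), |βi xi + βj xj| ≤ n0 sqrt(βi + βj) for all i ≠ j, and |βi xi| ≤ n0 sqrt(βi) for each i. If α1, α2, α3 ≥ 0 with α1/β1 ≤ α2/β2 ≤ α3/β3, then α1 x1 + α2 x2 + α3 x3 ≤ n0 [ (α1/β1) sqrt(β1+β2+β3) + (α2/β2 − α1/β1) sqrt(β2+β3) + (α3/β3 − α2/β2) sqrt(β3) ]. -/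
theorem K3_upper_bound
    (n0 α1 α2 α3 β1 β2 β3 x1 x2 x3 : ℝ) (hn0 : 0 ≤ n0)
    (hβ1 : 0 < β1) (hβ2 : 0 < β2) (hβ3 : 0 < β3)
    (hα1 : 0 ≤ α1) (hα2 : 0 ≤ α2) (hα3 : 0 ≤ α3)
    (hr12 : α1 / β1 ≤ α2 / β2) (hr23 : α2 / β2 ≤ α3 / β3)
    (h123 : |β1 * x1 + β2 * x2 + β3 * x3| ≤ n0 * Real.sqrt (β1 + β2 + β3))
    (h12 : |β1 * x1 + β2 * x2| ≤ n0 * Real.sqrt (β1 + β2))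
    (h13 : |β1 * x1 + β3 * x3| ≤ n0 * Real.sqrt (β1 + β3))
    (h23 : |β2 * x2 + β3 * x3| ≤ n0 * Real.sqrt (β2 + β3))
    (h1 : |β1 * x1| ≤ n0 * Real.sqrt β1)
    (h2 : |β2 * x2| ≤ n0 * Real.sqrt β2)
    (h3 : |β3 * x3| ≤ n0 * Real.sqrt β3) :
    α1 * x1 + α2 * x2 + α3 * x3 ≤
      n0 * ((α1 / β1) * Real.sqrt (β1 + β2 + β3) +
            (α2 / β2 - α1 / β1) * Real.sqrt (β2 + β3) +
            (α3 / β3 - α2 / β2) * Real.sqrt β3) := by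
  have e1 : α1 = (α1 / β1) * β1 := by field_simp
  have e2 : α2 = (α2 / β2) * β2 := by field_simp
  have e3 : α3 = (α3 / β3) * β3 := by field_simp
  have hg1 : 0 ≤ α1 / β1 := div_nonneg hα1 hβ1.le
  have b123 : β1 * x1 + β2 * x2 + β3 * x3 ≤ n0 * Real.sqrt (β1 + β2 + β3) :=
    (le_abs_self _).trans h123
  have b23 : β2 * x2 + β3 * x3 ≤ n0 * Real.sqrt (β2 + β3) :=
    (le_abs_self _).trans h23
  have b3 : β3 * x3 ≤ n0 * Real.sqrt β3 := (le_abs_self _).trans h3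
  have t1 := mul_le_mul_of_nonneg_left b123 hg1
  have t2 := mul_le_mul_of_nonneg_left b23 (sub_nonneg.mpr hr12)
  have t3 := mul_le_mul_of_nonneg_left b3 (sub_nonneg.mpr hr23)
  have key : α1 * x1 + α2 * x2 + α3 * x3 =
      (α1 / β1) * (β1 * x1 + β2 * x2 + β3 * x3)
      + (α2 / β2 - α1 / β1) * (β2 * x2 + β3 * x3)
      + (α3 / β3 - α2 / β2) * (β3 * x3) := by
    rw [e1, e2, e3]; field_simp; ring
  rw [key]; nlinarith [t1, t2, t3]
end

section
/- Let β : Fin K → ℝ be positive and x, x' : Fin K → ℝ. If x satisfies the equalities ∑_{k ≥ n} β k * x k = n0 * sqrt(∑_{k ≥ n} β k) for all n ∈ Fin K (with n0 ≥ 0), then x is uniquely determined: x k = (n0/β k)(sqrt(∑_{n ≥ k} β n) − sqrt(∑_{n ≥ k+1} β n)) for all k. -/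
theorem tail_system_unique_solution
    (K : ℕ) (n0 : ℝ) (hn0 : 0 ≤ n0)
    (β : Fin K → ℝ) (hβ : ∀ k, 0 < β k)
    (x : Fin K → ℝ)
    (hx : ∀ n : Fin K,
      ∑ k ∈ Finset.univ.filter (fun k => n ≤ k), β k * x k =
        n0 * Real.sqrt (∑ k ∈ Finset.univ.filter (fun k => n ≤ k), β k)) :
    ∀ k : Fin K, x k = (n0 / β k) *
      (Real.sqrt (∑ m ∈ Finset.univ.filter (fun m => k ≤ m), β m) -
       Real.sqrt (∑ m ∈ Finset.univ.filter (fun m => k < m), β m)) := by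
  intro k
  -- tail equation for the strict tail
  have hstrict : ∀ f : Fin K → ℝ,
      ∑ m ∈ Finset.univ.filter (fun m => k ≤ m), f m
        = f k + ∑ m ∈ Finset.univ.filter (fun m => k < m), f m := by
    intro f
    have hset : Finset.univ.filter (fun m : Fin K => k ≤ m)
        = insert k (Finset.univ.filter (fun m : Fin K => k < m)) := by
      ext m
      simp [Finset.mem_filter, Finset.mem_insert, le_iff_lt_or_eq, eq_comm, or_comm]
    rw [hset, Finset.sum_insert (by simp)]
  have hlt : ∑ m ∈ Finset.univ.filter (fun m => k < m), β m * x m =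
      n0 * Real.sqrt (∑ m ∈ Finset.univ.filter (fun m => k < m), β m) := by
    by_cases hK : k.val + 1 < K
    · have hset : (Finset.univ.filter (fun m : Fin K => k < m))
          = Finset.univ.filter (fun m : Fin K => (⟨k.val+1, hK⟩ : Fin K) ≤ m) := by
        ext m
        simp only [Finset.mem_filter, Finset.mem_univ, true_and, Fin.lt_def, Fin.le_def]
        omega
      rw [hset]
      exact hx ⟨k.val+1, hK⟩
    · have hempty : (Finset.univ.filter (fun m : Fin K => k < m)) = ∅ := by
        ext m
        simp only [Finset.mem_filter, Finset.mem_univ, true_and, Finset.notMem_empty,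
          iff_false]
        intro h
        exact hK (lt_of_lt_of_le (Nat.succ_lt_succ h) m.isLt)
      rw [hempty]
      simp
  have hk := hx k
  rw [hstrict (fun m => β m * x m), hstrict β, hlt] at hk
  have hβk := (hβ k).ne'
  have : β k * x k = n0 * (Real.sqrt (∑ m ∈ Finset.univ.filter (fun m => k ≤ m), β m) -
       Real.sqrt (∑ m ∈ Finset.univ.filter (fun m => k < m), β m)) := by
    rw [hstrict β]
    linarith [hk]
  field_simp
  linarith [this, hstrict β]
end

section
/- Let n0 ≥ 0 and let α, β : Fin K → ℝ with α k ≥ 0, β k > 0, and γ k = α k / β k nondecreasing. Define F = n0 * ∑_{n=0}^{K-1} (γ n − γ (n−1)) * sqrt(∑_{k=n}^{K-1} β k) with γ_{−1} := 0. If x k = (n0/β k)(sqrt(∑_{m ≥ k} β m) − sqrt(∑_{m ≥ k+1} β m)), then ∑_k α k * x k = F. -/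
/-!
Writing `γ k = α k / β k` and `T n = √(∑_{m ≥ n} β m)`, each term is
`α k * x k = n0 * γ k * (T k - T (k + 1))`. Summation by parts moves the differences onto `γ`,
and the boundary term vanishes because `T K` is the square root of an empty sum.
-/

open Finset

theorem Finset.sum_range_mul_sub_succ_add {R : Type*} [CommRing R] (g T : ℕ → R) (K : ℕ) :
    ∑ n ∈ range K, g n * (T n - T (n + 1)) + (if K = 0 then 0 else g (K - 1)) * T K =
      ∑ n ∈ range K, (g n - if n = 0 then 0 else g (n - 1)) * T n := by
  induction K with
  | zero => simp
  | succ K ih =>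
    simp only [sum_range_succ, ← ih, Nat.succ_ne_zero, if_false, Nat.add_sub_cancel]
    ring

theorem Finset.sum_range_mul_sub_succ_of_eq_zero {R : Type*} [CommRing R] (g T : ℕ → R)
    {K : ℕ} (hT : T K = 0) :
    ∑ n ∈ range K, g n * (T n - T (n + 1)) =
      ∑ n ∈ range K, (g n - if n = 0 then 0 else g (n - 1)) * T n := by
  simpa [hT] using sum_range_mul_sub_succ_add g T K

theorem optimal_point_attains_Fmax_general
    (K : ℕ) (n0 : ℝ)
    (α β : Fin K → ℝ)
    (x : Fin K → ℝ)
    (hx : ∀ k : Fin K, x k = (n0 / β k) *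
      (Real.sqrt (∑ m ∈ Finset.univ.filter (fun m => k ≤ m), β m) -
       Real.sqrt (∑ m ∈ Finset.univ.filter (fun m => k < m), β m))) :
    ∑ k, α k * x k =
      n0 * ∑ n : Fin K,
        ((α n / β n) -
          (if n.val = 0 then 0 else
            α ⟨n.val - 1, Nat.lt_of_le_of_lt (Nat.sub_le _ _) n.isLt⟩ /
            β ⟨n.val - 1, Nat.lt_of_le_of_lt (Nat.sub_le _ _) n.isLt⟩)) *
        Real.sqrt (∑ k ∈ Finset.univ.filter (fun k => n ≤ k), β k) := by
  set γ : ℕ → ℝ := fun n => if h : n < K then α ⟨n, h⟩ / β ⟨n, h⟩ else 0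
  set T : ℕ → ℝ := fun n => √(∑ k ∈ univ.filter (fun k : Fin K => n ≤ k.val), β k)
  have hTK : T K = 0 := by simp [T, fun k : Fin K => not_le.2 k.isLt]
  have hterm (k : Fin K) : α k * x k = n0 * (γ k * (T k - T (k + 1))) := by
    simp only [hx, γ, T, dif_pos k.isLt, Fin.le_def, Fin.lt_def, Nat.add_one_le_iff]
    ring
  have hcoef (n : Fin K) :
      γ n - (if n.val = 0 then 0 else γ (n - 1)) =
        α n / β n - (if n.val = 0 then 0 else
          α ⟨n.val - 1, Nat.lt_of_le_of_lt (Nat.sub_le _ _) n.isLt⟩ /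
          β ⟨n.val - 1, Nat.lt_of_le_of_lt (Nat.sub_le _ _) n.isLt⟩) := by
    simp only [γ, dif_pos n.isLt, dif_pos (Nat.lt_of_le_of_lt (Nat.sub_le _ _) n.isLt)]
  calc ∑ k, α k * x k = n0 * ∑ n ∈ range K, γ n * (T n - T (n + 1)) := by
        simp only [hterm, ← mul_sum, Fin.sum_univ_eq_sum_range (fun n => γ n * (T n - T (n + 1)))]
    _ = n0 * ∑ n ∈ range K, (γ n - if n = 0 then 0 else γ (n - 1)) * T n := by
        rw [sum_range_mul_sub_succ_of_eq_zero γ T hTK]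
    _ = _ := by
        rw [← Fin.sum_univ_eq_sum_range (fun n => (γ n - if n = 0 then 0 else γ (n - 1)) * T n)]
        simp only [hcoef, T, Fin.le_def]

theorem optimal_point_attains_Fmax
    (K : ℕ) (hK : 0 < K) (n0 : ℝ) (hn0 : 0 ≤ n0)
    (α β : Fin K → ℝ) (hα : ∀ k, 0 ≤ α k) (hβ : ∀ k, 0 < β k)
    (hmono : ∀ i j : Fin K, i ≤ j → α i / β i ≤ α j / β j)
    (x : Fin K → ℝ)
    (hx : ∀ k : Fin K, x k = (n0 / β k) *
      (Real.sqrt (∑ m ∈ Finset.univ.filter (fun m => k ≤ m), β m) -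
       Real.sqrt (∑ m ∈ Finset.univ.filter (fun m => k < m), β m))) :
    ∑ k, α k * x k =
      n0 * ∑ n : Fin K,
        ((α n / β n) -
          (if n.val = 0 then 0 else
            α ⟨n.val - 1, Nat.lt_of_le_of_lt (Nat.sub_le _ _) n.isLt⟩ /
            β ⟨n.val - 1, Nat.lt_of_le_of_lt (Nat.sub_le _ _) n.isLt⟩)) *
        Real.sqrt (∑ k ∈ Finset.univ.filter (fun k => n ≤ k), β k) :=
  optimal_point_attains_Fmax_general K n0 α β x hx
end

section
/- Let n0 ≥ 0, α k ≥ 0, β k > 0 for k ∈ Fin K with γ k = α k/β k nondecreasing, and let F_max be as in Theorem 1. If x satisfies ∑_{k∈S} β k x k ≥ −n0 sqrt(∑_{k∈S} β k) for all nonempty S ⊆ Fin K, then ∑_k α k x k ≥ −F_max, with equality attained at x k = −(n0/β k)(sqrt(∑_{m ≥ k} β m) − sqrt(∑_{m ≥ k+1} β m)). -/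
/-- Abel summation with zero right boundary. -/
lemma abel_aux_s18 (K : ℕ) (hK : 0 < K) (g b : ℕ → ℝ) (hbK : b K = 0) :
    ∑ n ∈ Finset.range K, g n * (b n - b (n + 1)) =
    ∑ n ∈ Finset.range K, (g n - (if n = 0 then 0 else g (n - 1))) * b n := by
  obtain ⟨K', rfl⟩ := Nat.exists_eq_succ_of_ne_zero hK.ne'
  simp only [mul_sub, sub_mul, Finset.sum_sub_distrib]
  congr 1
  rw [Finset.sum_range_succ, hbK, mul_zero, add_zero,
    Finset.sum_range_succ' (f := fun n => (if n = 0 then 0 else g (n - 1)) * b n)]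
  simp

lemma tail_split (K : ℕ) (n : ℕ) (h : n < K) (f : Fin K → ℝ) :
    ∑ k ∈ Finset.univ.filter (fun k : Fin K => n ≤ k.val), f k =
      f ⟨n, h⟩ + ∑ k ∈ Finset.univ.filter (fun k : Fin K => n + 1 ≤ k.val), f k := by
  have hset : Finset.univ.filter (fun k : Fin K => n ≤ k.val) =
      insert ⟨n, h⟩ (Finset.univ.filter (fun k : Fin K => n + 1 ≤ k.val)) := by
    ext k
    simp [Fin.ext_iff]
    omega
  rw [hset, Finset.sum_insert (by simp)]

theorem linear_objective_lower_bound_and_attained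
    (K : ℕ) (hK : 0 < K) (n0 : ℝ) (hn0 : 0 ≤ n0)
    (α β : Fin K → ℝ) (hα : ∀ k, 0 ≤ α k) (hβ : ∀ k, 0 < β k)
    (hmono : ∀ i j : Fin K, i ≤ j → α i / β i ≤ α j / β j) :
    (∀ x : Fin K → ℝ,
      (∀ S : Finset (Fin K), S.Nonempty →
        -(n0 * Real.sqrt (∑ k ∈ S, β k)) ≤ ∑ k ∈ S, β k * x k) →
      -(n0 * ∑ n : Fin K,
          ((α n / β n) -
            (if n.val = 0 then 0 else
              α ⟨n.val - 1, Nat.lt_of_le_of_lt (Nat.sub_le _ _) n.isLt⟩ /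
              β ⟨n.val - 1, Nat.lt_of_le_of_lt (Nat.sub_le _ _) n.isLt⟩)) *
          Real.sqrt (∑ k ∈ Finset.univ.filter (fun k => n ≤ k), β k)) ≤
        ∑ k, α k * x k) ∧
    (∑ k, α k * (-((n0 / β k) *
        (Real.sqrt (∑ m ∈ Finset.univ.filter (fun m => k ≤ m), β m) -
         Real.sqrt (∑ m ∈ Finset.univ.filter (fun m => k < m), β m)))) =
      -(n0 * ∑ n : Fin K,
          ((α n / β n) -
            (if n.val = 0 then 0 else
              α ⟨n.val - 1, Nat.lt_of_le_of_lt (Nat.sub_le _ _) n.isLt⟩ /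
              β ⟨n.val - 1, Nat.lt_of_le_of_lt (Nat.sub_le _ _) n.isLt⟩)) *
          Real.sqrt (∑ k ∈ Finset.univ.filter (fun k => n ≤ k), β k))) := by
  classical
  -- notation
  set G : ℕ → ℝ := fun n => if h : n < K then α ⟨n, h⟩ / β ⟨n, h⟩ else 0 with hG
  set B : ℕ → ℝ := fun n => ∑ k ∈ Finset.univ.filter (fun k : Fin K => n ≤ k.val), β k with hB
  set b : ℕ → ℝ := fun n => Real.sqrt (B n) with hb
  set c : ℕ → ℝ := fun n => G n - (if n = 0 then 0 else G (n - 1)) with hc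
  have hBK : B K = 0 := by
    have : Finset.univ.filter (fun k : Fin K => K ≤ k.val) = (∅ : Finset (Fin K)) := by
      ext k; simp
    simp [hB, this]
  have hbK : b K = 0 := by simp [hb, hBK]
  have hcnn : ∀ n < K, 0 ≤ c n := by
    intro n hn
    rcases Nat.eq_zero_or_pos n with h0 | h0
    · subst h0
      have hc0 : c 0 = G 0 := by simp [hc]
      rw [hc0]
      simp only [hG, dif_pos hn]
      exact div_nonneg (hα _) (hβ _).le
    · have hn1 : n - 1 < K := by omega
      have hcn : c n = G n - G (n - 1) := by simp [hc, h0.ne']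
      rw [hcn, sub_nonneg]
      simp only [hG, dif_pos hn, dif_pos hn1]
      exact hmono ⟨n - 1, hn1⟩ ⟨n, hn⟩ (by simp [Fin.le_def])
  -- the RHS sum over Fin K equals the range-K sum of c * b
  have hRHS : (∑ n : Fin K,
      ((α n / β n) -
        (if n.val = 0 then 0 else
          α ⟨n.val - 1, Nat.lt_of_le_of_lt (Nat.sub_le _ _) n.isLt⟩ /
          β ⟨n.val - 1, Nat.lt_of_le_of_lt (Nat.sub_le _ _) n.isLt⟩)) *
      Real.sqrt (∑ k ∈ Finset.univ.filter (fun k => n ≤ k), β k)) =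
      ∑ n ∈ Finset.range K, c n * b n := by
    rw [← Fin.sum_univ_eq_sum_range (fun n => c n * b n) K]
    refine Finset.sum_congr rfl fun n _ => ?_
    have h1 : G n.val = α n / β n := by
      simp only [hG, dif_pos n.isLt]
    have h2 : (if (n : ℕ) = 0 then (0 : ℝ) else G (n.val - 1)) =
        (if n.val = 0 then 0 else
          α ⟨n.val - 1, Nat.lt_of_le_of_lt (Nat.sub_le _ _) n.isLt⟩ /
          β ⟨n.val - 1, Nat.lt_of_le_of_lt (Nat.sub_le _ _) n.isLt⟩) := by
      split_ifs with h
      · rfl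
      · simp only [hG, dif_pos (Nat.lt_of_le_of_lt (Nat.sub_le _ _) n.isLt)]
    have h3 : Finset.univ.filter (fun k : Fin K => n ≤ k) =
        Finset.univ.filter (fun k : Fin K => n.val ≤ k.val) := by
      ext m; simp only [Finset.mem_filter, Finset.mem_univ, true_and, Fin.le_def]
    simp only [hc, hb, hB, h1, h2, h3]
  constructor
  · intro x hx
    set S : ℕ → ℝ := fun n => ∑ k ∈ Finset.univ.filter (fun k : Fin K => n ≤ k.val), β k * x k
      with hS
    have hSK : S K = 0 := by
      have : Finset.univ.filter (fun k : Fin K => K ≤ k.val) = (∅ : Finset (Fin K)) := by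
        ext k; simp
      simp [hS, this]
    have hSbound : ∀ n < K, -(n0 * b n) ≤ S n := by
      intro n hn
      have hfil : Finset.univ.filter (fun k : Fin K => (⟨n, hn⟩ : Fin K) ≤ k) =
          Finset.univ.filter (fun k : Fin K => n ≤ k.val) := by
        apply Finset.filter_congr; intro k _; simp [Fin.le_def]
      have hne : (Finset.univ.filter (fun k : Fin K => (⟨n, hn⟩ : Fin K) ≤ k)).Nonempty :=
        ⟨⟨n, hn⟩, by simp⟩
      have h := hx _ hne
      rw [hfil] at h
      exact h
    have hsum : ∑ k, α k * x k = ∑ n ∈ Finset.range K, G n * (S n - S (n + 1)) := by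
      rw [← Fin.sum_univ_eq_sum_range (fun n => G n * (S n - S (n + 1))) K]
      refine Finset.sum_congr rfl fun n _ => ?_
      have hdiff : S n.val - S (n.val + 1) = β n * x n := by
        have h := tail_split K n.val n.isLt (fun k => β k * x k)
        simp only [hS]
        rw [h, Fin.eta]; ring
      rw [hdiff]
      simp only [hG, dif_pos n.isLt, Fin.eta]
      have hβn := (hβ n).ne'
      field_simp
    rw [hsum, abel_aux_s18 K hK G S hSK, hRHS]
    calc -(n0 * ∑ n ∈ Finset.range K, c n * b n)
        = ∑ n ∈ Finset.range K, c n * (-(n0 * b n)) := by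
          simp only [Finset.mul_sum, ← Finset.sum_neg_distrib]
          exact Finset.sum_congr rfl fun n _ => by ring
      _ ≤ ∑ n ∈ Finset.range K, c n * S n := by
          refine Finset.sum_le_sum fun n hn => ?_
          have hn' := Finset.mem_range.mp hn
          exact mul_le_mul_of_nonneg_left (hSbound n hn') (hcnn n hn')
      _ = ∑ n ∈ Finset.range K, (G n - if n = 0 then 0 else G (n - 1)) * S n := rfl
  · have hstep : ∀ k : Fin K,
        α k * (-((n0 / β k) *
          (Real.sqrt (∑ m ∈ Finset.univ.filter (fun m => k ≤ m), β m) -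
           Real.sqrt (∑ m ∈ Finset.univ.filter (fun m => k < m), β m)))) =
        -(n0 * (G k.val * (b k.val - b (k.val + 1)))) := by
      intro k
      have h3 : Finset.univ.filter (fun m : Fin K => k ≤ m) =
          Finset.univ.filter (fun m : Fin K => k.val ≤ m.val) := by
        ext m; simp only [Finset.mem_filter, Finset.mem_univ, true_and, Fin.le_def]
      have h4 : Finset.univ.filter (fun m : Fin K => k < m) =
          Finset.univ.filter (fun m : Fin K => k.val + 1 ≤ m.val) := by
        ext m
        simp only [Finset.mem_filter, Finset.mem_univ, true_and, Fin.lt_def]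
        omega
      rw [h3, h4]
      simp only [hG, dif_pos k.isLt, Fin.eta, hb, hB]
      ring
    calc (∑ k, α k * (-((n0 / β k) *
          (Real.sqrt (∑ m ∈ Finset.univ.filter (fun m => k ≤ m), β m) -
           Real.sqrt (∑ m ∈ Finset.univ.filter (fun m => k < m), β m)))))
        = ∑ k : Fin K, -(n0 * (G k.val * (b k.val - b (k.val + 1)))) :=
          Finset.sum_congr rfl fun k _ => hstep k
      _ = ∑ n ∈ Finset.range K, -(n0 * (G n * (b n - b (n + 1)))) :=
          Fin.sum_univ_eq_sum_range (fun n => -(n0 * (G n * (b n - b (n + 1))))) K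
      _ = -(n0 * ∑ n ∈ Finset.range K, G n * (b n - b (n + 1))) := by
          simp only [Finset.mul_sum, ← Finset.sum_neg_distrib]
      _ = -(n0 * ∑ n ∈ Finset.range K, c n * b n) := by rw [abel_aux_s18 K hK G b hbK]
      _ = _ := by rw [hRHS]
end
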